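/- arXiv:1804.05437 — 3 statements merged into one kernel-verified Lean document; each statement's English description precedes it below -/
import Mathlib

section
/- Let q ≠ 0 and r be real numbers. For every nonnegative integer n, ĉ_n^q(−r) = ∑_{k=0}^n ∑_{j=0}^k (1 / k!) w(n,k) w(k,j) B_j^q(r). -/
/-- The falling factorial `(x)_k = x(x-1)⋯(x-k+1)`. -/
noncomputable def fallFac (x : ℝ) (k : ℕ) : ℝ := ∏ i ∈ Finset.range k, (x - i)

/-- The generalized falling factorial `(x|q)_k = x(x-q)⋯(x-(k-1)q)`. -/
noncomputable def genFallFac (q x : ℝ) (k : ℕ) : ℝ := ∏ i ∈ Finset.range k, (x - i * q)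

/-- The Cauchy polynomials with a `q` parameter of the second kind:
`ĉ_n^q(z) = ∫_0^1 (−x + z | q)_n dx`. -/
noncomputable def cauchySecond (q z : ℝ) (n : ℕ) : ℝ := ∫ x in (0:ℝ)..1, genFallFac q (-x + z) n

/-!
Substituting `x ↦ (-x - r)/q` in the defining identity of `w` gives
`(-x - r | q)_n = ∑_j w(n,j) (-x)^j`, so integrating over `[0,1]` yields
`ĉ_n^q(-r) = ∑_k w(n,k) (-1)^k/(k+1)`. On the other side, the two Whitney
matrices are mutually inverse lower triangular matrices (compare the falling
factorial expansions of `q^k (x)_k`, which are unique because `(m)_i = 0` for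
`m < i` and `(m)_m = m!`), so `∑_j w(k,j) B_j^q(r) = (-1)^k k!/(k+1)` and the
double sum collapses to the same value.
-/

open Finset

lemma fallFac_natCast_self (m : ℕ) : fallFac m m = m.factorial := by
  induction m with
  | zero => simp [fallFac]
  | succ m ih =>
    rw [fallFac, prod_range_succ', Nat.factorial_succ, Nat.cast_mul, ← ih, fallFac, mul_comm]
    push_cast
    congr 1
    · ring
    · exact prod_congr rfl fun i _ => by ring

lemma fallFac_natCast_of_lt {m i : ℕ} (h : m < i) : fallFac m i = 0 :=
  prod_eq_zero (mem_range.mpr h) (sub_self _)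

lemma eq_zero_of_sum_mul_fallFac_eq_zero {N : ℕ} {d : ℕ → ℝ}
    (h : ∀ x, ∑ i ∈ range N, d i * fallFac x i = 0) {i : ℕ} (hi : i < N) : d i = 0 := by
  induction i using Nat.strong_induction_on with
  | _ i ih =>
    have hi' := h i
    rw [sum_eq_single_of_mem i (mem_range.mpr hi), fallFac_natCast_self] at hi'
    · exact (mul_eq_zero.mp hi').resolve_right (Nat.cast_ne_zero.mpr i.factorial_ne_zero)
    · intro b _ hbi
      rcases lt_or_gt_of_ne hbi with hlt | hgt
      · rw [ih b hlt (hlt.trans hi), zero_mul]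
      · rw [fallFac_natCast_of_lt hgt, mul_zero]

lemma genFallFac_eq_pow_mul_fallFac {q : ℝ} (hq : q ≠ 0) (z : ℝ) (n : ℕ) :
    genFallFac q z n = q ^ n * fallFac (z / q) n := by
  rw [genFallFac, fallFac, pow_eq_prod_const, ← prod_mul_distrib]
  exact prod_congr rfl fun i _ => by field_simp

lemma integral_neg_pow (j : ℕ) : ∫ x in (0:ℝ)..1, (-x) ^ j = (-1) ^ j / (j + 1) := by
  rw [show (fun x : ℝ => (-x) ^ j) = fun x => (-1) ^ j * x ^ j from funext fun x => neg_pow x j,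
    intervalIntegral.integral_const_mul, integral_pow]
  simp [div_eq_mul_inv]

lemma sum_range_eq_sum_range_of_le {f : ℕ → ℝ} {m N : ℕ} (hmN : m ≤ N)
    (hf : ∀ i, m ≤ i → f i = 0) : ∑ i ∈ range N, f i = ∑ i ∈ range m, f i :=
  (sum_subset (range_subset_range.mpr hmN) fun i _ hi => hf i (by simpa using hi)).symm

section Whitney

variable {q r : ℝ} {W w : ℕ → ℕ → ℝ} (hq : q ≠ 0)
    (hW0 : ∀ n k, n < k → W n k = 0)
    (hW : ∀ n : ℕ, ∀ x : ℝ,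
      (q * x + r) ^ n = ∑ k ∈ range (n + 1), q ^ k * W n k * fallFac x k)
    (hw : ∀ n : ℕ, ∀ x : ℝ,
      q ^ n * fallFac x n = ∑ k ∈ range (n + 1), w n k * (q * x + r) ^ k)

include hq hw in
lemma cauchySecond_neg_eq_sum (n : ℕ) :
    cauchySecond q (-r) n = ∑ j ∈ range (n + 1), w n j * ((-1) ^ j / (j + 1)) := by
  have integrand : ∀ x, genFallFac q (-x + -r) n = ∑ j ∈ range (n + 1), w n j * (-x) ^ j := by
    intro x
    have hsubst : q * ((-x + -r) / q) + r = -x := by field_simp; ring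
    rw [genFallFac_eq_pow_mul_fallFac hq, hw, hsubst]
  simp_rw [cauchySecond, integrand]
  rw [intervalIntegral.integral_finsetSum fun j _ =>
    (by fun_prop : Continuous _).intervalIntegrable _ _]
  simp_rw [intervalIntegral.integral_const_mul, integral_neg_pow]

include hW0 in
lemma sum_range_mul_whitneySecond_of_le (a : ℕ → ℝ) {j k : ℕ} (hjk : j ≤ k) :
    ∑ i ∈ range (k + 1), a i * W j i = ∑ i ∈ range (j + 1), a i * W j i :=
  sum_range_eq_sum_range_of_le (by omega) fun i hi => by rw [hW0 j i (by omega), mul_zero]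

include hq hW0 hW hw

lemma sum_whitneyFirst_mul_whitneySecond {i k : ℕ} (hik : i ≤ k) :
    ∑ j ∈ range (k + 1), w k j * W j i = if i = k then 1 else 0 := by
  have expansion : ∀ x, ∑ i ∈ range (k + 1),
      q ^ i * (∑ j ∈ range (k + 1), w k j * W j i) * fallFac x i = q ^ k * fallFac x k :=
    fun x =>
    calc _ = ∑ j ∈ range (k + 1),
            w k j * ∑ i ∈ range (k + 1), q ^ i * fallFac x i * W j i := by
          simp_rw [mul_sum, sum_mul]
          rw [sum_comm]
          exact sum_congr rfl fun _ _ => sum_congr rfl fun _ _ => by ring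
      _ = ∑ j ∈ range (k + 1), w k j * (q * x + r) ^ j := by
          refine sum_congr rfl fun j hj => ?_
          rw [sum_range_mul_whitneySecond_of_le hW0 _ (Nat.lt_succ_iff.mp (mem_range.mp hj)),
            hW]
          exact congrArg _ (sum_congr rfl fun _ _ => by ring)
      _ = q ^ k * fallFac x k := (hw k x).symm
  have hcoeff : q ^ i * ∑ j ∈ range (k + 1), w k j * W j i = if i = k then q ^ k else 0 := by
    have hdiff : ∀ x, ∑ i ∈ range (k + 1),
        (q ^ i * ∑ j ∈ range (k + 1), w k j * W j i - if i = k then q ^ k else 0) * fallFac x i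
        = 0 := fun x => by simp [sub_mul, sum_sub_distrib, expansion]
    exact sub_eq_zero.mp (eq_zero_of_sum_mul_fallFac_eq_zero hdiff (i := i) (by omega))
  split_ifs at hcoeff ⊢ with h
  · subst h
    exact mul_left_cancel₀ (pow_ne_zero i hq) (hcoeff.trans (mul_one _).symm)
  · exact (mul_eq_zero.mp hcoeff).resolve_left (pow_ne_zero i hq)

lemma sum_whitneyFirst_mul_sum_whitneySecond (a : ℕ → ℝ) (k : ℕ) :
    ∑ j ∈ range (k + 1), w k j * ∑ i ∈ range (j + 1), a i * W j i = a k := by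
  calc _ = ∑ j ∈ range (k + 1), w k j * ∑ i ∈ range (k + 1), a i * W j i :=
        sum_congr rfl fun j hj => by
          rw [sum_range_mul_whitneySecond_of_le hW0 _ (Nat.lt_succ_iff.mp (mem_range.mp hj))]
    _ = ∑ i ∈ range (k + 1), a i * ∑ j ∈ range (k + 1), w k j * W j i := by
        simp_rw [mul_sum]
        rw [sum_comm]
        exact sum_congr rfl fun _ _ => sum_congr rfl fun _ _ => by ring
    _ = ∑ i ∈ range (k + 1), a i * if i = k then 1 else 0 :=
        sum_congr rfl fun i hi => by
          rw [sum_whitneyFirst_mul_whitneySecond hq hW0 hW hw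
            (Nat.lt_succ_iff.mp (mem_range.mp hi))]
    _ = a k := by simp

end Whitney

theorem cauchySecond_eq_double_sum_bernoulli_q_general (q r : ℝ) (hq : q ≠ 0)
    (W : ℕ → ℕ → ℝ)
    (hW0 : ∀ n k, n < k → W n k = 0)
    (hW : ∀ n : ℕ, ∀ x : ℝ, (q * x + r) ^ n =
      ∑ k ∈ Finset.range (n + 1), q ^ k * W n k * fallFac x k)
    (w : ℕ → ℕ → ℝ)
    (hw : ∀ n : ℕ, ∀ x : ℝ, q ^ n * fallFac x n =
      ∑ k ∈ Finset.range (n + 1), w n k * (q * x + r) ^ k)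
    (B : ℕ → ℝ)
    (hB : ∀ n, B n = ∑ k ∈ Finset.range (n + 1),
      (-1 : ℝ) ^ k * ((k.factorial : ℝ) / ((k : ℝ) + 1)) * W n k)
    (n : ℕ) :
    cauchySecond q (-r) n = ∑ k ∈ Finset.range (n + 1), ∑ j ∈ Finset.range (k + 1),
      (1 / (k.factorial : ℝ)) * w n k * w k j * B j := by
  rw [cauchySecond_neg_eq_sum hq hw]
  refine sum_congr rfl fun k _ => ?_
  have hB_sum : ∑ j ∈ range (k + 1), w k j * B j = (-1) ^ k * (k.factorial / (k + 1)) := by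
    simp_rw [hB]
    exact sum_whitneyFirst_mul_sum_whitneySecond hq hW0 hW hw _ k
  have hk : (k.factorial : ℝ) ≠ 0 := Nat.cast_ne_zero.mpr k.factorial_ne_zero
  simp_rw [mul_assoc, ← mul_sum, hB_sum]
  field_simp

/-- `ĉ_n^q(−r) = ∑_{k=0}^n ∑_{j=0}^k (1/k!) w(n,k) w(k,j) B_j^q(r)`. -/
theorem cauchySecond_eq_double_sum_bernoulli_q (q r : ℝ) (hq : q ≠ 0)
    (W : ℕ → ℕ → ℝ)
    (hW0 : ∀ n k, n < k → W n k = 0)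
    (hW : ∀ n : ℕ, ∀ x : ℝ, (q * x + r) ^ n =
      ∑ k ∈ Finset.range (n + 1), q ^ k * W n k * fallFac x k)
    (w : ℕ → ℕ → ℝ)
    (hw0 : ∀ n k, n < k → w n k = 0)
    (hw : ∀ n : ℕ, ∀ x : ℝ, q ^ n * fallFac x n =
      ∑ k ∈ Finset.range (n + 1), w n k * (q * x + r) ^ k)
    (B : ℕ → ℝ)
    (hB : ∀ n, B n = ∑ k ∈ Finset.range (n + 1),
      (-1 : ℝ) ^ k * ((k.factorial : ℝ) / ((k : ℝ) + 1)) * W n k)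
    (n : ℕ) :
    cauchySecond q (-r) n = ∑ k ∈ Finset.range (n + 1), ∑ j ∈ Finset.range (k + 1),
      (1 / (k.factorial : ℝ)) * w n k * w k j * B j :=
  cauchySecond_eq_double_sum_bernoulli_q_general q r hq W hW0 hW w hw B hB n
end

section
/- Let q ≠ 0 and r be real numbers. For every nonnegative integer n, B_n^q(r) = ∑_{j=0}^n C(n,j) r^{n−j} B_j^q, where B_j^q = B_j^q(0) and C(n,j) denotes the binomial coefficient. -/
lemma fallFac_nat_eq_zero {m k : ℕ} (h : m < k) : fallFac (m : ℝ) k = 0 := by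
  apply Finset.prod_eq_zero (Finset.mem_range.mpr h)
  simp

lemma prod_add_one (m : ℕ) : ∏ j ∈ Finset.range m, ((j : ℝ) + 1) = m.factorial := by
  induction m with
  | zero => simp
  | succ m ih =>
    rw [Finset.prod_range_succ, ih, Nat.factorial_succ]
    push_cast
    ring

lemma fallFac_nat_self (m : ℕ) : fallFac (m : ℝ) m = m.factorial := by
  unfold fallFac
  rw [← Finset.prod_range_reflect (fun j => (m : ℝ) - j) m]
  have heq : ∀ j ∈ Finset.range m, (m : ℝ) - ((m - 1 - j : ℕ) : ℝ) = (j : ℝ) + 1 := by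
    intro j hj
    have hj' := Finset.mem_range.mp hj
    have h1 : m - 1 - j + (j + 1) = m := by omega
    have h2 : ((m - 1 - j : ℕ) : ℝ) + ((j : ℝ) + 1) = (m : ℝ) := by
      exact_mod_cast congrArg (Nat.cast : ℕ → ℝ) h1
    linarith
  rw [Finset.prod_congr rfl heq, prod_add_one]

lemma coeff_zero (N : ℕ) (c : ℕ → ℝ)
    (h : ∀ x : ℝ, ∑ k ∈ Finset.range N, c k * fallFac x k = 0) :
    ∀ k, k < N → c k = 0 := by
  intro k
  induction k using Nat.strong_induction_on with
  | _ k ih =>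
    intro hk
    have h0 := h (k : ℝ)
    have hsum : ∑ i ∈ Finset.range N, c i * fallFac (k : ℝ) i
        = c k * fallFac (k : ℝ) k := by
      apply Finset.sum_eq_single
      · intro i hi hne
        rcases lt_or_gt_of_ne hne with hlt | hgt
        · rw [ih i hlt (lt_trans hlt hk)]; ring
        · rw [fallFac_nat_eq_zero hgt]; ring
      · intro hk'; exact absurd (Finset.mem_range.mpr hk) hk'
    rw [hsum, fallFac_nat_self] at h0
    have hfac : (k.factorial : ℝ) ≠ 0 := by
      exact_mod_cast Nat.factorial_ne_zero k
    exact (mul_eq_zero.mp h0).resolve_right hfac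

/-- `B_n^q(r) = ∑_{j=0}^n C(n,j) r^{n−j} B_j^q`, where `B_j^q = B_j^q(0)` and
`B_n^q(a)` is defined from the `a`-Whitney numbers of the second kind `W a`. -/
theorem bernoulli_q_eq_sum_bernoulli_q_numbers (q r : ℝ) (hq : q ≠ 0)
    (W : ℝ → ℕ → ℕ → ℝ)
    (hW0 : ∀ (a : ℝ) (n k : ℕ), n < k → W a n k = 0)
    (hW : ∀ (a : ℝ) (n : ℕ), ∀ x : ℝ, (q * x + a) ^ n =
      ∑ k ∈ Finset.range (n + 1), q ^ k * W a n k * fallFac x k)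
    (B : ℝ → ℕ → ℝ)
    (hB : ∀ (a : ℝ) (n : ℕ), B a n = ∑ k ∈ Finset.range (n + 1),
      (-1 : ℝ) ^ k * ((k.factorial : ℝ) / ((k : ℝ) + 1)) * W a n k)
    (n : ℕ) :
    B r n = ∑ j ∈ Finset.range (n + 1),
      (n.choose j : ℝ) * r ^ (n - j) * B 0 j := by
  -- the expansion of (q*x+r)^n via binomial theorem and the a=0 Whitney numbers
  have expand : ∀ x : ℝ, (q * x + r) ^ n =
      ∑ k ∈ Finset.range (n + 1),
        (q ^ k * ∑ j ∈ Finset.range (n + 1),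
          (n.choose j : ℝ) * r ^ (n - j) * W 0 j k) * fallFac x k := by
    intro x
    rw [add_pow]
    have step1 : ∀ j ∈ Finset.range (n + 1),
        (q * x) ^ j * r ^ (n - j) * (n.choose j : ℝ)
        = ∑ k ∈ Finset.range (n + 1),
            (n.choose j : ℝ) * r ^ (n - j) * (q ^ k * W 0 j k * fallFac x k) := by
      intro j hj
      have hj' := Finset.mem_range.mp hj
      have h1 : (q * x) ^ j = ∑ k ∈ Finset.range (j + 1),
          q ^ k * W 0 j k * fallFac x k := by
        have := hW 0 j x
        simpa using this
      have h2 : ∑ k ∈ Finset.range (j + 1), q ^ k * W 0 j k * fallFac x k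
          = ∑ k ∈ Finset.range (n + 1), q ^ k * W 0 j k * fallFac x k := by
        apply Finset.sum_subset
        · exact Finset.range_subset_range.mpr (by omega)
        · intro k _ hk
          rw [hW0 0 j k (by simp at hk; omega)]
          ring
      rw [h1, h2, Finset.sum_mul, Finset.sum_mul]
      apply Finset.sum_congr rfl
      intro k _
      ring
    rw [Finset.sum_congr rfl step1, Finset.sum_comm]
    apply Finset.sum_congr rfl
    intro k _
    rw [Finset.mul_sum, Finset.sum_mul]
    apply Finset.sum_congr rfl
    intro j _
    ring
  -- coefficients match
  have key : ∀ k, k < n + 1 → W r n k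
      = ∑ j ∈ Finset.range (n + 1), (n.choose j : ℝ) * r ^ (n - j) * W 0 j k := by
    have hz : ∀ x : ℝ, ∑ k ∈ Finset.range (n + 1),
        (q ^ k * W r n k - q ^ k * ∑ j ∈ Finset.range (n + 1),
          (n.choose j : ℝ) * r ^ (n - j) * W 0 j k) * fallFac x k = 0 := by
      intro x
      have h1 := hW r n x
      have h2 := expand x
      have : ∑ k ∈ Finset.range (n + 1),
          (q ^ k * W r n k - q ^ k * ∑ j ∈ Finset.range (n + 1),
            (n.choose j : ℝ) * r ^ (n - j) * W 0 j k) * fallFac x k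
          = (∑ k ∈ Finset.range (n + 1), q ^ k * W r n k * fallFac x k)
            - ∑ k ∈ Finset.range (n + 1),
              (q ^ k * ∑ j ∈ Finset.range (n + 1),
                (n.choose j : ℝ) * r ^ (n - j) * W 0 j k) * fallFac x k := by
        rw [← Finset.sum_sub_distrib]
        apply Finset.sum_congr rfl
        intro k _
        ring
      rw [this, ← h1, ← h2]
      ring
    intro k hk
    have := coeff_zero (n + 1) _ hz k hk
    have hqk : q ^ k ≠ 0 := pow_ne_zero k hq
    have : q ^ k * (W r n k - ∑ j ∈ Finset.range (n + 1),
        (n.choose j : ℝ) * r ^ (n - j) * W 0 j k) = 0 := by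
      rw [mul_sub]; linarith [this]
    have := (mul_eq_zero.mp this).resolve_left hqk
    linarith
  -- conclude
  rw [hB r n]
  have : ∑ k ∈ Finset.range (n + 1),
      (-1 : ℝ) ^ k * ((k.factorial : ℝ) / ((k : ℝ) + 1)) * W r n k
      = ∑ k ∈ Finset.range (n + 1), ∑ j ∈ Finset.range (n + 1),
        (n.choose j : ℝ) * r ^ (n - j) *
          ((-1 : ℝ) ^ k * ((k.factorial : ℝ) / ((k : ℝ) + 1)) * W 0 j k) := by
    apply Finset.sum_congr rfl
    intro k hk
    rw [key k (Finset.mem_range.mp hk), Finset.mul_sum]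
    apply Finset.sum_congr rfl
    intro j _
    ring
  rw [this, Finset.sum_comm]
  apply Finset.sum_congr rfl
  intro j hj
  have hj' := Finset.mem_range.mp hj
  rw [hB 0 j, Finset.mul_sum]
  exact (Finset.sum_subset (Finset.range_subset_range.mpr (by omega))
    (fun k _ hk => by rw [hW0 0 j k (by simp at hk; omega)]; ring)).symm
end

section
/- Let q ≠ 0 and r be real numbers. For all nonnegative integers n and k with k ≤ n, W(n,k) = (1/(q^k k!)) ∑_{j=0}^k (−1)^{k−j} C(k,j) (r + jq)^n, where C(k,j) denotes the binomial coefficient. -/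
/-!
Apply the `k`-th forward difference at `0` to both sides of
`(qx + r)^n = ∑ᵢ qⁱ W(n,i) (x)ᵢ`. On the left it is the alternating binomial sum of the values
`(r + jq)^n`. On the right, `(j)ᵢ = i! C(j,i)` for natural `j`, and the `k`-th difference of
`j ↦ C(j,i)` at `0` is `δᵢₖ`, so only the term `i = k` survives, leaving `k! qᵏ W(n,k)`.
-/

open Finset Function fwdDiff

theorem fallFac_natCast (j i : ℕ) : fallFac j i = i.factorial * j.choose i := by
  rw [fallFac, ← descPochhammer_eval_eq_prod_range, descPochhammer_eval_eq_descFactorial,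
    Nat.descFactorial_eq_factorial_mul_choose, Nat.cast_mul]

theorem fwdDiff_iter_eq_sum_alternating {R : Type*} [CommRing R] (f : R → R) (k : ℕ) :
    Δ_[1] ^[k] f 0 = ∑ j ∈ range (k + 1), (-1 : R) ^ (k - j) * k.choose j * f j := by
  simp [fwdDiff_iter_eq_sum_shift, zsmul_eq_mul]

theorem sum_alternating_choose_mul_choose (k i : ℕ) :
    ∑ j ∈ range (k + 1), (-1 : ℤ) ^ (k - j) * k.choose j * j.choose i =
      if k = i then 1 else 0 := by
  simpa [fwdDiff_iter_eq_sum_shift] using fwdDiff_iter_choose_zero i k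

theorem fwdDiff_iter_fallFac_zero (i k : ℕ) :
    Δ_[1] ^[k] (fallFac · i) 0 = if k = i then (k.factorial : ℝ) else 0 := by
  have hchoose : ∑ j ∈ range (k + 1), (-1 : ℝ) ^ (k - j) * k.choose j * j.choose i =
      if k = i then 1 else 0 := by
    exact_mod_cast sum_alternating_choose_mul_choose k i
  simp_rw [fwdDiff_iter_eq_sum_alternating, fallFac_natCast]
  calc ∑ j ∈ range (k + 1), (-1 : ℝ) ^ (k - j) * k.choose j * (i.factorial * j.choose i)
      = i.factorial * ∑ j ∈ range (k + 1), (-1 : ℝ) ^ (k - j) * k.choose j * j.choose i := by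
        rw [mul_sum]; exact sum_congr rfl fun _ _ => by ring
    _ = if k = i then (k.factorial : ℝ) else 0 := by
        rw [hchoose]; split_ifs with hki <;> simp [hki]

theorem fwdDiff_iter_sum_fallFac_zero (c : ℕ → ℝ) {n k : ℕ} (hk : k ≤ n) :
    Δ_[1] ^[k] (fun x => ∑ i ∈ range (n + 1), c i * fallFac x i) 0 = k.factorial * c k := by
  have hfun : (fun x => ∑ i ∈ range (n + 1), c i * fallFac x i) =
      ∑ i ∈ range (n + 1), c i • (fallFac · i) := by
    ext x; simp [Finset.sum_apply]
  rw [hfun, fwdDiff_iter_finsetSum, Finset.sum_apply]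
  simp_rw [fwdDiff_iter_const_smul, Pi.smul_apply, fwdDiff_iter_fallFac_zero, smul_eq_mul,
    mul_ite, mul_zero, sum_ite_eq, mem_range, if_pos (Nat.lt_succ_of_le hk), mul_comm]

theorem whitneySecond_explicit_general (q r : ℝ) (hq : q ≠ 0)
    (W : ℕ → ℕ → ℝ)
    (hW : ∀ n : ℕ, ∀ x : ℝ, (q * x + r) ^ n =
      ∑ k ∈ Finset.range (n + 1), q ^ k * W n k * fallFac x k)
    (n k : ℕ) (hkn : k ≤ n) :
    W n k = (1 / (q ^ k * (k.factorial : ℝ))) *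
      ∑ j ∈ Finset.range (k + 1),
        (-1 : ℝ) ^ (k - j) * (k.choose j : ℝ) * (r + (j : ℝ) * q) ^ n := by
  have hdiff := fwdDiff_iter_sum_fallFac_zero (fun i => q ^ i * W n i) hkn
  rw [← funext (hW n), fwdDiff_iter_eq_sum_alternating] at hdiff
  simp_rw [add_comm r, mul_comm _ q, hdiff]
  field_simp

/-- the explicit formula for the `r`-Whitney numbers of the second kind:
`W(n,k) = (1/(q^k k!)) ∑_{j=0}^k (−1)^{k−j} C(k,j) (r + jq)^n`. -/
theorem whitneySecond_explicit (q r : ℝ) (hq : q ≠ 0)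
    (W : ℕ → ℕ → ℝ)
    (hW0 : ∀ n k, n < k → W n k = 0)
    (hW : ∀ n : ℕ, ∀ x : ℝ, (q * x + r) ^ n =
      ∑ k ∈ Finset.range (n + 1), q ^ k * W n k * fallFac x k)
    (n k : ℕ) (hkn : k ≤ n) :
    W n k = (1 / (q ^ k * (k.factorial : ℝ))) *
      ∑ j ∈ Finset.range (k + 1),
        (-1 : ℝ) ^ (k - j) * (k.choose j : ℝ) * (r + (j : ℝ) * q) ^ n :=
  whitneySecond_explicit_general q r hq W hW n k hkn
end
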